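/- arXiv:0705.2109 — 6 statements merged into one kernel-verified Lean document; each statement's English description precedes it below -/
import Mathlib

section
/- Let F and Q be disjoint subsets of ℚ with F infinite and F having no isolated points in Q ∪ F (with the subspace topology from ℝ). Then there exists a bijection f : Q ∪ F → Q ∪ F such that f is the identity on Q, f(x) ≠ x and f(f(x)) = x for all x ∈ F, and the set of continuity points of f (as a map between subspaces of ℝ) is exactly Q. -/
/-!
Enumerate `F = {y 0, y 1, …}` and the points of `Q ∪ F` at which `F` accumulates as
`t 0, t 1, …`. It suffices to find an involution `g` of `ℝ` that swaps the points of `F` in pairs,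
fixes everything else, and satisfies `g x → s` as `x → s` through `F \ {s}` for every
`s ∈ Q ∪ F`: its restriction is then continuous at the points of `Q`, while at `p ∈ F` it tends
to `p ≠ g p`.

The pairs are formed greedily. Step `j` pairs the least unpaired index `c` with a partner `m`: if
`y c` lies at distance `d < 1` from `{t 0, …, t j}`, then `m` must satisfy
`|y m - y c| ≤ d + 2⁻ʲ`, otherwise `m` is unrestricted; among the allowed `m`, the weight
`min (dist (y m) {t 0, …, t j}) 1` is at least half its supremum. The distance rule handles a
point near `t i` that is paired as the chooser. If instead it is taken as the partner of a chooser
`y c` far from `t i`, then no later chooser of the same kind was an allowed partner for `y c`,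
since its weight would have beaten that of a point near `t i`. So these choosers stay in a bounded
region and are pairwise separated, and there are only finitely many of them.
-/

open Set Filter Topology Metric Function

lemma Set.Infinite.exists_dist_lt_of_isBounded {X : Type*} [MetricSpace X] [ProperSpace X]
    {S : Set X} (hS : S.Infinite) (hb : Bornology.IsBounded S) {r : ℝ} (hr : 0 < r) :
    ∃ a ∈ S, ∃ b ∈ S, a ≠ b ∧ dist a b < r := by
  obtain ⟨z, -, hz⟩ := hS.exists_accPt_of_subset_isCompact hb.isCompact_closure subset_closure
  obtain ⟨a, ⟨ha, haS⟩, b, ⟨hb, hbS⟩, hab⟩ :=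
    (Set.Infinite.of_accPt (hz.nhds_inter (ball_mem_nhds z (half_pos hr)))).nontrivial
  refine ⟨a, haS, b, hbS, hab, (dist_triangle_right a b z).trans_lt ?_⟩
  linarith [mem_ball.mp ha, mem_ball.mp hb]

lemma exists_half_sSup_le {α : Type*} {S : Set α} (hS : S.Nonempty) {f : α → ℝ}
    (hf : ∀ a, 0 ≤ f a) : ∃ a ∈ S, sSup (f '' S) / 2 ≤ f a := by
  obtain ⟨a₀, ha₀⟩ := hS
  by_cases hpos : 0 < sSup (f '' S)
  · obtain ⟨_, ⟨a, ha, rfl⟩, hlt⟩ :=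
      exists_lt_of_lt_csSup ⟨_, mem_image_of_mem f ha₀⟩ (half_lt_self hpos)
    exact ⟨a, ha, hlt.le⟩
  · exact ⟨a₀, ha₀, by linarith [hf a₀]⟩

lemma Set.MapsTo.continuousAt_restrict_iff {X Y : Type*} [TopologicalSpace X]
    [TopologicalSpace Y] {f : X → Y} {s : Set X} {t : Set Y} (h : MapsTo f s t) (x : s) :
    ContinuousAt (h.restrict f s t) x ↔ ContinuousWithinAt f s x :=
  (continuousAt_codRestrict_iff _).trans
    (continuousWithinAt_iff_continuousAt_domRestrict f x.2).symm

namespace GreedyPairing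

noncomputable def firstFree (U : Finset ℕ) : ℕ := Nat.find (Infinite.exists_notMem_finset U)

lemma firstFree_notMem (U : Finset ℕ) : firstFree U ∉ U :=
  Nat.find_spec (Infinite.exists_notMem_finset U)

lemma firstFree_le {U : Finset ℕ} {k : ℕ} (hk : k ∉ U) : firstFree U ≤ k :=
  Nat.find_min' _ hk

variable (next : ℕ → Finset ℕ → ℕ)

noncomputable def used : ℕ → Finset ℕ
  | 0 => ∅
  | j + 1 => insert (firstFree (used j)) (insert (next j (used j)) (used j))

noncomputable def fst (j : ℕ) : ℕ := firstFree (used next j)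

noncomputable def snd (j : ℕ) : ℕ := next j (used next j)

lemma mem_used_succ {j k : ℕ} :
    k ∈ used next (j + 1) ↔ k = fst next j ∨ k = snd next j ∨ k ∈ used next j := by
  simp only [used, Finset.mem_insert, fst, snd]

lemma mem_used_iff {n k : ℕ} : k ∈ used next n ↔ ∃ j < n, k = fst next j ∨ k = snd next j := by
  induction n with
  | zero => simp [used]
  | succ n ih =>
    rw [mem_used_succ, ih]
    constructor
    · rintro (h | h | ⟨j, hj, h⟩)
      exacts [⟨n, n.lt_succ_self, .inl h⟩, ⟨n, n.lt_succ_self, .inr h⟩, ⟨j, by omega, h⟩]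
    · rintro ⟨j, hj, h⟩
      rcases Nat.lt_succ_iff_lt_or_eq.mp hj with hj | rfl
      · exact .inr (.inr ⟨j, hj, h⟩)
      · exact h.elim .inl (.inr ∘ .inl)

lemma used_mono : Monotone (used next) :=
  monotone_nat_of_le_succ fun _ _ hk => (mem_used_succ next).mpr (.inr (.inr hk))

lemma range_subset_used (n : ℕ) : Finset.range n ⊆ used next n := by
  induction n with
  | zero => simp
  | succ n ih =>
    intro k hk
    rw [mem_used_succ]
    rcases Nat.lt_succ_iff_lt_or_eq.mp (Finset.mem_range.mp hk) with hk | rfl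
    · exact .inr (.inr (ih (Finset.mem_range.mpr hk)))
    by_contra! h
    have hle : fst next k ≤ k := firstFree_le h.2.2
    exact firstFree_notMem _ (ih (Finset.mem_range.mpr (lt_of_le_of_ne hle h.1.symm)))

lemma exists_mem_pair (k : ℕ) : ∃ j, k = fst next j ∨ k = snd next j := by
  obtain ⟨j, -, h⟩ :=
    (mem_used_iff next).mp (range_subset_used next (k + 1) (Finset.self_mem_range_succ k))
  exact ⟨j, h⟩

noncomputable def mate (k : ℕ) : ℕ :=
  let j := Nat.find (exists_mem_pair next k)
  if k = fst next j then snd next j else fst next j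

variable {next} (hnext : ∀ j U, next j U ∉ insert (firstFree U) U)
include hnext

lemma snd_ne_fst (j : ℕ) : snd next j ≠ fst next j :=
  fun h => hnext j _ (Finset.mem_insert.mpr (.inl h))

lemma notMem_used_of_mem_pair {j k : ℕ} (hk : k = fst next j ∨ k = snd next j) :
    k ∉ used next j := by
  rcases hk with rfl | rfl
  · exact firstFree_notMem _
  · exact fun h => hnext j _ (Finset.mem_insert_of_mem h)

lemma fst_notMem_insert_of_lt {j j' : ℕ} (h : j < j') :
    fst next j' ∉ insert (fst next j) (used next j) := fun hmem =>
  notMem_used_of_mem_pair hnext (.inl rfl) <|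
    used_mono next h <| (mem_used_succ next).mpr <| (Finset.mem_insert.mp hmem).imp id .inr

lemma eq_of_mem_pair {j j' k : ℕ} (hj : k = fst next j ∨ k = snd next j)
    (hj' : k = fst next j' ∨ k = snd next j') : j = j' := by
  by_contra hne
  wlog hlt : j < j' generalizing j j'
  · exact this hj' hj (Ne.symm hne) (by omega)
  exact notMem_used_of_mem_pair hnext hj' <|
    used_mono next hlt <| (mem_used_iff next).mpr ⟨j, j.lt_succ_self, hj⟩

lemma fst_injective : Injective (fst next) := fun _ _ h =>
  eq_of_mem_pair hnext (.inl rfl) (.inl h)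

lemma mate_fst (j : ℕ) : mate next (fst next j) = snd next j := by
  have h := eq_of_mem_pair hnext (Nat.find_spec (exists_mem_pair next (fst next j))) (.inl rfl)
  simp only [mate, h, if_true]

lemma mate_snd (j : ℕ) : mate next (snd next j) = fst next j := by
  have h := eq_of_mem_pair hnext (Nat.find_spec (exists_mem_pair next (snd next j))) (.inr rfl)
  simp only [mate, h, if_neg (snd_ne_fst hnext j)]

lemma mate_involutive : Involutive (mate next) := fun k => by
  obtain ⟨j, rfl | rfl⟩ := exists_mem_pair next k
  · rw [mate_fst hnext, mate_snd hnext]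
  · rw [mate_snd hnext, mate_fst hnext]

lemma mate_ne (k : ℕ) : mate next k ≠ k := by
  obtain ⟨j, rfl | rfl⟩ := exists_mem_pair next k
  · rw [mate_fst hnext]; exact snd_ne_fst hnext j
  · rw [mate_snd hnext]; exact (snd_ne_fst hnext j).symm

end GreedyPairing

namespace LocalPairing

open GreedyPairing

variable (y t : ℕ → ℝ)

noncomputable def distPrefix (j : ℕ) (x : ℝ) : ℝ := infDist x (t '' Iic j)

noncomputable def weight (j : ℕ) (x : ℝ) : ℝ := min (distPrefix t j x) 1

def candidates (j : ℕ) (U : Finset ℕ) : Set ℕ :=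
  {m | m ∉ insert (firstFree U) U ∧
    (distPrefix t j (y (firstFree U)) < 1 →
      dist (y m) (y (firstFree U)) ≤ distPrefix t j (y (firstFree U)) + (1 / 2) ^ j)}

open Classical in
noncomputable def choosePartner (j : ℕ) (U : Finset ℕ) : ℕ :=
  if h : ∃ m ∈ candidates y t j U,
      sSup ((fun m => weight t j (y m)) '' candidates y t j U) / 2 ≤ weight t j (y m)
  then h.choose else firstFree (insert (firstFree U) U)

lemma choosePartner_notMem (j : ℕ) (U : Finset ℕ) :
    choosePartner y t j U ∉ insert (firstFree U) U := by
  unfold choosePartner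
  split_ifs with h
  · exact h.choose_spec.1.1
  · exact firstFree_notMem _

noncomputable abbrev chooser (j : ℕ) : ℕ := fst (choosePartner y t) j

noncomputable abbrev partner (j : ℕ) : ℕ := snd (choosePartner y t) j

def FarStep (i N : ℕ) (ε : ℝ) (j : ℕ) : Prop :=
  N ≤ j ∧ dist (y (partner y t j)) (t i) ≤ ε / 100 ∧
    ε ≤ dist (y (partner y t j)) (y (chooser y t j))

noncomputable def extendMate : ℝ → ℝ := extend y (y ∘ mate (choosePartner y t)) id

variable {y} in
lemma extendMate_apply (hy : Injective y) (k : ℕ) :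
    extendMate y t (y k) = y (mate (choosePartner y t) k) :=
  hy.extend_apply _ _ k

variable {y} in
lemma extendMate_of_notMem {x : ℝ} (hx : x ∉ range y) : extendMate y t x = x :=
  extend_apply' _ _ x fun ⟨k, hk⟩ => hx ⟨k, hk⟩

variable {y} in
lemma extendMate_involutive (hy : Injective y) : Involutive (extendMate y t) := fun x => by
  by_cases hx : x ∈ range y
  · obtain ⟨k, rfl⟩ := hx
    rw [extendMate_apply t hy, extendMate_apply t hy, mate_involutive (choosePartner_notMem y t)]
  · rw [extendMate_of_notMem t hx, extendMate_of_notMem t hx]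

lemma distPrefix_le_dist {i j : ℕ} (hij : i ≤ j) (x : ℝ) : distPrefix t j x ≤ dist x (t i) :=
  infDist_le_dist_of_mem ⟨i, hij, rfl⟩

lemma distPrefix_anti {j j' : ℕ} (h : j ≤ j') (x : ℝ) : distPrefix t j' x ≤ distPrefix t j x :=
  infDist_le_infDist_of_subset (image_mono (Iic_subset_Iic.mpr h)) ⟨t j, j, self_mem_Iic, rfl⟩

lemma weight_nonneg (j : ℕ) (x : ℝ) : 0 ≤ weight t j x :=
  le_min infDist_nonneg zero_le_one

lemma bddAbove_weight (j : ℕ) (S : Set ℕ) : BddAbove ((fun m => weight t j (y m)) '' S) :=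
  ⟨1, forall_mem_image.mpr fun _ _ => min_le_right _ _⟩

variable {y t}

lemma chooser_mem_candidates {j j' : ℕ} (h : j < j')
    (hball : distPrefix t j (y (chooser y t j)) < 1 → dist (y (chooser y t j')) (y (chooser y t j))
      ≤ distPrefix t j (y (chooser y t j)) + (1 / 2) ^ j) :
    chooser y t j' ∈ candidates y t j (used (choosePartner y t) j) :=
  ⟨fst_notMem_insert_of_lt (choosePartner_notMem y t) h, hball⟩

variable (hacc : ∀ i, AccPt (t i) (𝓟 (range y)))
include hacc

lemma candidates_nonempty (j : ℕ) (U : Finset ℕ) : (candidates y t j U).Nonempty := by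
  set c := firstFree U
  have hfin : (↑(insert c U) : Set ℕ).Finite := Finset.finite_toSet _
  by_cases hnear : distPrefix t j (y c) < 1
  · obtain ⟨_, ⟨l, -, rfl⟩, hl⟩ := ((finite_Iic j).image t).isCompact.exists_infDist_eq_dist
      ⟨t j, j, self_mem_Iic, rfl⟩ (y c)
    have hball : (y ⁻¹' (ball (t l) ((1 / 2) ^ j) ∩ range y)).Infinite :=
      (Set.Infinite.of_accPt ((hacc l).nhds_inter (ball_mem_nhds _ (by positivity)))).preimage
        inter_subset_right
    obtain ⟨m, ⟨hm, -⟩, hmU⟩ := (hball.sdiff hfin).nonempty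
    refine ⟨m, hmU, fun _ => ?_⟩
    have hl' : dist (t l) (y c) = distPrefix t j (y c) := (dist_comm _ _).trans hl.symm
    linarith [dist_triangle (y m) (t l) (y c), mem_ball.mp hm]
  · obtain ⟨m, hm⟩ := hfin.infinite_compl.nonempty
    exact ⟨m, hm, fun h => absurd h hnear⟩

lemma choosePartner_spec (j : ℕ) (U : Finset ℕ) :
    choosePartner y t j U ∈ candidates y t j U ∧
      sSup ((fun m => weight t j (y m)) '' candidates y t j U) / 2
        ≤ weight t j (y (choosePartner y t j U)) := by
  have h := exists_half_sSup_le (candidates_nonempty hacc j U) fun m => weight_nonneg t j (y m)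
  rw [choosePartner, dif_pos h]
  exact h.choose_spec

lemma dist_partner_chooser_le {j : ℕ} (hnear : distPrefix t j (y (chooser y t j)) < 1) :
    dist (y (partner y t j)) (y (chooser y t j))
      ≤ distPrefix t j (y (chooser y t j)) + (1 / 2) ^ j :=
  (choosePartner_spec hacc j _).1.2 hnear

section FarSteps

variable {i N : ℕ} {ε : ℝ} (hε : 0 < ε) (hε1 : ε ≤ 1) (hN : (1 / 2 : ℝ) ^ N ≤ ε / 100)
include hε hε1 hN

lemma half_le_distPrefix_chooser {j : ℕ} (hj : FarStep y t i N ε j) :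
    ε / 2 ≤ distPrefix t j (y (chooser y t j)) := by
  have hpow : (1 / 2 : ℝ) ^ j ≤ ε / 100 :=
    (pow_le_pow_of_le_one (by norm_num) (by norm_num) hj.1).trans hN
  by_cases hnear : distPrefix t j (y (chooser y t j)) < 1
  · linarith [dist_partner_chooser_le hacc hnear, hj.2.2]
  · linarith

/-- Were `chooser j'` an allowed partner at step `j`, its weight would force the partner chosen
at step `j` to be far from `t i`. -/
lemma near_and_separated_of_farStep (hiN : i ≤ N) {j j' : ℕ} (hj : FarStep y t i N ε j)
    (hj' : FarStep y t i N ε j') (hlt : j < j') :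
    distPrefix t j (y (chooser y t j)) < 1 ∧
      ε / 2 < dist (y (chooser y t j')) (y (chooser y t j)) := by
  by_contra! hclose
  have hfar := half_le_distPrefix_chooser hacc hε hε1 hN hj
  have hcand := chooser_mem_candidates hlt fun hnear => (hclose hnear).trans
    (by linarith [pow_nonneg (one_half_pos (α := ℝ)).le j])
  have hweight_chooser : ε / 2 ≤ weight t j (y (chooser y t j')) :=
    le_min ((half_le_distPrefix_chooser hacc hε hε1 hN hj').trans (distPrefix_anti t hlt.le _))
      (by linarith)
  have hweight_partner : weight t j (y (partner y t j)) ≤ ε / 100 :=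
    (min_le_left _ _).trans ((distPrefix_le_dist t (hiN.trans hj.1) _).trans hj.2.1)
  have hsup := le_csSup (bddAbove_weight y t j _) (mem_image_of_mem _ hcand)
  have hpartner : sSup ((fun m => weight t j (y m)) ''
      candidates y t j (used (choosePartner y t) j)) / 2 ≤ weight t j (y (partner y t j)) :=
    (choosePartner_spec hacc j _).2
  linarith

lemma finite_farStep (hiN : i ≤ N) (hy : Injective y) : {j | FarStep y t i N ε j}.Finite := by
  refine Set.not_infinite.mp fun hinf => ?_
  set S := (fun j => y (chooser y t j)) '' {j | FarStep y t i N ε j}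
  have hS : S.Infinite := hinf.image (hy.comp (fst_injective (choosePartner_notMem y t))).injOn
  have hbdd : Bornology.IsBounded S := by
    refine (isBounded_closedBall (x := t i) (r := 3)).subset ?_
    rintro _ ⟨j, hj, rfl⟩
    obtain ⟨j', hj', hlt⟩ := hinf.exists_gt j
    have hnear := (near_and_separated_of_farStep hacc hε hε1 hN hiN hj hj' hlt).1
    have hpow : (1 / 2 : ℝ) ^ j ≤ 1 := pow_le_one₀ (by norm_num) (by norm_num)
    rw [mem_closedBall]
    linarith [dist_triangle (y (chooser y t j)) (y (partner y t j)) (t i),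
      dist_comm (y (chooser y t j)) (y (partner y t j)), dist_partner_chooser_le hacc hnear, hj.2.1]
  obtain ⟨_, ⟨j, hj, rfl⟩, _, ⟨j', hj', rfl⟩, hne, hdist⟩ :=
    hS.exists_dist_lt_of_isBounded hbdd (half_pos hε)
  rcases lt_or_gt_of_ne (fun h : j = j' => hne (h ▸ rfl)) with hlt | hlt
  · linarith [(near_and_separated_of_farStep hacc hε hε1 hN hiN hj hj' hlt).2,
      dist_comm (y (chooser y t j)) (y (chooser y t j'))]
  · linarith [(near_and_separated_of_farStep hacc hε hε1 hN hiN hj' hj hlt).2]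

end FarSteps

lemma finite_setOf_far_mate {ε : ℝ} (hε : 0 < ε) (hε1 : ε ≤ 1) (hy : Injective y) (i : ℕ) :
    {k | dist (y k) (t i) ≤ ε / 100 ∧ ε ≤ dist (y (mate (choosePartner y t) k)) (y k)}.Finite := by
  obtain ⟨N₀, hN₀⟩ := exists_pow_lt_of_lt_one (show 0 < ε / 100 by positivity)
    (show (1 / 2 : ℝ) < 1 by norm_num)
  set N := max i N₀
  have hN : (1 / 2 : ℝ) ^ N ≤ ε / 100 :=
    (pow_le_pow_of_le_one (by norm_num) (by norm_num) (le_max_right _ _)).trans hN₀.le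
  refine ((used (choosePartner y t) N).finite_toSet.union
    ((finite_farStep hacc hε hε1 hN (le_max_left i N₀) hy).image (partner y t))).subset ?_
  rintro k ⟨hk_close, hk_far⟩
  obtain ⟨j, hk⟩ := exists_mem_pair (choosePartner y t) k
  by_cases hjN : j < N
  · exact .inl ((mem_used_iff _).mpr ⟨j, hjN, hk⟩)
  rw [not_lt] at hjN
  have hpow : (1 / 2 : ℝ) ^ j ≤ ε / 100 :=
    (pow_le_pow_of_le_one (by norm_num) (by norm_num) hjN).trans hN
  rcases hk with rfl | rfl
  · rw [mate_fst (choosePartner_notMem y t)] at hk_far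
    have hprefix := distPrefix_le_dist t ((le_max_left i N₀).trans hjN) (y (chooser y t j))
    have hnear : distPrefix t j (y (chooser y t j)) < 1 := by linarith
    linarith [dist_partner_chooser_le hacc hnear]
  · rw [mate_snd (choosePartner_notMem y t), dist_comm] at hk_far
    exact .inr ⟨j, ⟨hjN, hk_close, hk_far⟩, rfl⟩

theorem tendsto_extendMate (hy : Injective y) (i : ℕ) :
    Tendsto (extendMate y t) (𝓝[range y \ {t i}] (t i)) (𝓝 (t i)) := by
  rw [Metric.tendsto_nhds]
  intro ε hε
  set δ := min ε 1 / 2 with hδ_def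
  have hδ : 0 < δ := by positivity
  have hδ1 : δ ≤ 1 := by linarith [min_le_right ε 1]
  set B := y '' {k | dist (y k) (t i) ≤ δ / 100 ∧ δ ≤ dist (y (mate (choosePartner y t) k)) (y k)}
    \ {t i}
  have hB : Bᶜ ∈ 𝓝 (t i) :=
    ((finite_setOf_far_mate hacc hδ hδ1 hy i).image y).sdiff.isClosed.compl_mem_nhds
      fun h => h.2 rfl
  filter_upwards [self_mem_nhdsWithin, mem_nhdsWithin_of_mem_nhds hB,
    mem_nhdsWithin_of_mem_nhds (ball_mem_nhds (t i) (show 0 < δ / 100 by positivity))]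
    with x hx hxB hxball
  obtain ⟨⟨k, rfl⟩, hne⟩ := hx
  have hk : dist (y (mate (choosePartner y t) k)) (y k) < δ := by
    by_contra! h
    exact hxB ⟨⟨k, ⟨(mem_ball.mp hxball).le, h⟩, rfl⟩, hne⟩
  rw [extendMate_apply t hy]
  linarith [dist_triangle (y (mate (choosePartner y t) k)) (y k) (t i), mem_ball.mp hxball,
    min_le_left ε 1]

end LocalPairing

open GreedyPairing LocalPairing in
theorem exists_involutive_tendsto_nhdsWithin_sdiff {F S : Set ℝ} (hFc : F.Countable)
    (hFi : F.Infinite) (hSc : S.Countable) :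
    ∃ g : ℝ → ℝ, Involutive g ∧ (∀ x ∉ F, g x = x) ∧ (∀ x ∈ F, g x ∈ F ∧ g x ≠ x) ∧
      ∀ s ∈ S, Tendsto g (𝓝[F \ {s}] s) (𝓝 s) := by
  obtain ⟨y, hy, rfl⟩ : ∃ y : ℕ → ℝ, Injective y ∧ range y = F := by
    obtain ⟨_⟩ := Set.countable_infinite_iff_nonempty_denumerable.mp ⟨hFc, hFi⟩
    exact ⟨Subtype.val ∘ (Denumerable.eqv F).symm, Subtype.val_injective.comp (Equiv.injective _),
      by rw [(Equiv.surjective _).range_comp, Subtype.range_coe]⟩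
  obtain ⟨t, ht⟩ : ∃ t : ℕ → ℝ, ∀ s ∈ S, AccPt s (𝓟 (range y)) →
      s ∈ range t ∧ ∀ i, AccPt (t i) (𝓟 (range y)) := by
    rcases (S ∩ {s | AccPt s (𝓟 (range y))}).eq_empty_or_nonempty with h | h
    · exact ⟨0, fun s hs hacc => (h.subset ⟨hs, hacc⟩).elim⟩
    · obtain ⟨t, ht⟩ := (hSc.mono inter_subset_left).exists_eq_range h
      exact ⟨t, fun s hs hacc => ⟨ht ▸ ⟨hs, hacc⟩, fun i => (ht.ge ⟨i, rfl⟩).2⟩⟩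
  refine ⟨extendMate y t, extendMate_involutive t hy, fun x hx => extendMate_of_notMem t hx, ?_,
    fun s hs => ?_⟩
  · rintro _ ⟨k, rfl⟩
    rw [extendMate_apply t hy]
    exact ⟨mem_range_self _, hy.ne (mate_ne (choosePartner_notMem y t) k)⟩
  · by_cases hacc : AccPt s (𝓟 (range y))
    · obtain ⟨⟨i, rfl⟩, ht_acc⟩ := ht s hs hacc
      exact tendsto_extendMate ht_acc hy i
    · rw [accPt_principal_iff_nhdsWithin, not_neBot] at hacc
      rw [hacc]
      exact tendsto_bot

theorem stmt_0 (Q F : Set ℝ)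
    (hQ : Q ⊆ Set.range ((↑) : ℚ → ℝ)) (hF : F ⊆ Set.range ((↑) : ℚ → ℝ))
    (hdisj : Disjoint Q F) (hinf : F.Infinite)
    (hni : ∀ x ∈ F, AccPt x (Filter.principal (Q ∪ F))) :
    ∃ f : ↥(Q ∪ F) → ↥(Q ∪ F), Function.Bijective f ∧
      (∀ x : ↥(Q ∪ F), (x : ℝ) ∈ Q → f x = x) ∧
      (∀ x : ↥(Q ∪ F), (x : ℝ) ∈ F → f x ≠ x ∧ f (f x) = x) ∧
      {x : ↥(Q ∪ F) | ContinuousAt f x} = {x : ↥(Q ∪ F) | (x : ℝ) ∈ Q} := by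
  have hFc : F.Countable := (countable_range _).mono hF
  obtain ⟨g, hg_inv, hg_fix, hg_F, hg_lim⟩ := exists_involutive_tendsto_nhdsWithin_sdiff hFc hinf
    (((countable_range _).mono hQ).union hFc)
  have hg_Q : ∀ x ∈ Q, g x = x := fun x hx => hg_fix x (disjoint_left.mp hdisj hx)
  have hmaps : MapsTo g (Q ∪ F) (Q ∪ F) := fun x hx =>
    hx.elim (fun hq => (hg_Q x hq).symm ▸ Or.inl hq) fun hf => Or.inr (hg_F x hf).1
  have hlim : ∀ s ∈ Q ∪ F, Tendsto g (𝓝[(Q ∪ F) \ {s}] s) (𝓝 s) := fun s hs => by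
    rw [union_sdiff_distrib, nhdsWithin_union]
    refine Tendsto.sup ?_ (hg_lim s hs)
    exact (tendsto_id.mono_left nhdsWithin_le_nhds).congr'
      (eventually_nhdsWithin_of_forall fun x hx => (hg_Q x hx.1).symm)
  have hinv : Involutive (hmaps.restrict g _ _) := fun x => Subtype.ext (hg_inv x)
  refine ⟨hmaps.restrict g _ _, hinv.bijective, fun x hx => Subtype.ext (hg_Q x hx),
    fun x hx => ⟨fun h => (hg_F x hx).2 (congrArg Subtype.val h), hinv x⟩, ?_⟩
  ext x
  change ContinuousAt _ x ↔ (x : ℝ) ∈ Q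
  rw [hmaps.continuousAt_restrict_iff, ← continuousWithinAt_sdiff_self]
  refine ⟨fun hc => x.2.resolve_right fun hx => ?_, fun hx => ?_⟩
  · have := accPt_principal_iff_nhdsWithin.mp (hni x hx)
    exact (hg_F x hx).2 (tendsto_nhds_unique hc (hlim x x.2))
  · rw [ContinuousWithinAt, hg_Q x hx]
    exact hlim x x.2
end

section
/- Let X be a countable metric space without isolated points, written as a disjoint union X = A ∪ B of two dense subsets, and let C ⊆ X be such that X \ C is a countable intersection of open sets (i.e., C is Fσ). Then there exists a function f : X → ℝ whose set of discontinuity points is exactly C. -/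
theorem stmt_2 (X : Type*) [MetricSpace X] [Countable X]
    (hni : ∀ x : X, AccPt x (Filter.principal Set.univ))
    (A B : Set X) (hdisj : Disjoint A B) (hAB : A ∪ B = Set.univ)
    (hA : Dense A) (hB : Dense B)
    (C : Set X) (hC : IsGδ Cᶜ) :
    ∃ f : X → ℝ, {x : X | ¬ ContinuousAt f x} = C := by
  classical
  obtain ⟨U, hUo, hUeq⟩ := isGδ_iff_eq_iInter_nat.mp hC
  have hmemC : ∀ x, x ∈ C ↔ ∃ n, x ∉ U n := by
    intro x
    constructor
    · intro hx
      by_contra h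
      push_neg at h
      have hx' : x ∈ Cᶜ := by rw [hUeq]; exact Set.mem_iInter.mpr h
      exact hx' hx
    · rintro ⟨n, hn⟩
      by_contra hx
      have hx' : x ∈ ⋂ n, U n := by rw [← hUeq]; exact hx
      exact hn (Set.mem_iInter.mp hx' n)
  set f : X → ℝ := fun x =>
    if hx : ∃ n, x ∉ U n then (if x ∈ A then 1 else -1) / (Nat.find hx + 1) else 0
    with hfdef
  have hfval : ∀ x (hx : ∃ n, x ∉ U n),
      f x = (if x ∈ A then 1 else -1) / (Nat.find hx + 1) := fun x hx => dif_pos hx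
  have hfzero : ∀ x, ¬ (∃ n, x ∉ U n) → f x = 0 := fun x hx => dif_neg hx
  have hApos : ∀ x ∈ A, 0 ≤ f x := by
    intro x hxA
    by_cases hx : ∃ n, x ∉ U n
    · rw [hfval x hx, if_pos hxA]
      positivity
    · rw [hfzero x hx]
  have hBneg : ∀ x ∈ B, f x ≤ 0 := by
    intro x hxB
    have hxA : x ∉ A := fun hxA => hdisj.ne_of_mem hxA hxB rfl
    by_cases hx : ∃ n, x ∉ U n
    · rw [hfval x hx, if_neg hxA]
      have : (0:ℝ) < Nat.find hx + 1 := by positivity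
      exact div_nonpos_of_nonpos_of_nonneg (by norm_num) this.le
    · rw [hfzero x hx]
  refine ⟨f, ?_⟩
  ext x
  simp only [Set.mem_setOf_eq]
  constructor
  · -- contrapositive: x ∉ C → continuous at x
    intro hdisc
    by_contra hxC
    apply hdisc
    have hx : ¬ ∃ n, x ∉ U n := fun h => hxC ((hmemC x).mpr h)
    push_neg at hx
    rw [Metric.continuousAt_iff]
    intro ε hε
    obtain ⟨n, hn⟩ := exists_nat_one_div_lt hε
    have hWopen : IsOpen (⋂ k ∈ Finset.range (n+1), U k) :=
      isOpen_biInter_finset fun k _ => hUo k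
    have hxW : x ∈ ⋂ k ∈ Finset.range (n+1), U k :=
      Set.mem_iInter₂.mpr fun k _ => hx k
    obtain ⟨δ, hδ, hball⟩ := Metric.isOpen_iff.mp hWopen x hxW
    refine ⟨δ, hδ, fun {y} hy => ?_⟩
    have hfx : f x = 0 := hfzero x (by push_neg; exact hx)
    rw [hfx, dist_zero_right]
    by_cases hy' : ∃ m, y ∉ U m
    · have hyW := hball hy
      have hfind : n < Nat.find hy' := by
        rw [Nat.lt_find_iff]
        intro m hm
        intro hmem
        exact hmem (Set.mem_iInter₂.mp hyW m (Finset.mem_range.mpr (Nat.lt_succ_of_le hm)))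
      have hden : ((n:ℝ) + 1) ≤ (Nat.find hy' : ℝ) + 1 := by
        have h1 : ((n:ℝ)) ≤ (Nat.find hy' : ℝ) := by exact_mod_cast hfind.le
        linarith
      have hnorm : ‖f y‖ = 1 / ((Nat.find hy' : ℝ) + 1) := by
        rw [hfval y hy']
        rcases ite_eq_or_eq (y ∈ A) (1:ℝ) (-1) with h | h <;> rw [h] <;>
          simp [abs_div, abs_of_nonneg (by positivity : (0:ℝ) ≤ (Nat.find hy' : ℝ) + 1)]
      rw [hnorm]
      calc 1 / ((Nat.find hy' : ℝ) + 1) ≤ 1 / ((n:ℝ) + 1) := by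
            apply one_div_le_one_div_of_le (by positivity) hden
        _ < ε := hn
    · rw [hfzero y hy', norm_zero]; exact hε
  · -- x ∈ C → discontinuous at x
    intro hxC
    have hx : ∃ n, x ∉ U n := (hmemC x).mp hxC
    intro hcont
    rw [Metric.continuousAt_iff] at hcont
    have hxAB : x ∈ A ∨ x ∈ B := by
      have : x ∈ A ∪ B := by rw [hAB]; trivial
      exact this
    have hpos : (0:ℝ) < 1 / ((Nat.find hx : ℝ) + 1) := by positivity
    rcases hxAB with hxA | hxB
    · have hfx : f x = 1 / ((Nat.find hx : ℝ) + 1) := by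
        rw [hfval x hx, if_pos hxA]
      obtain ⟨δ, hδ, hball⟩ := hcont _ hpos
      obtain ⟨y, hyB, hyd⟩ := Metric.mem_closure_iff.mp (hB x) δ hδ
      have hyf : f y ≤ 0 := hBneg y hyB
      have := hball (by rw [dist_comm]; exact hyd)
      rw [Real.dist_eq, hfx] at this
      have habs := neg_abs_le (f y - 1 / ((Nat.find hx : ℝ) + 1))
      linarith
    · have hxA : x ∉ A := fun h => hdisj.ne_of_mem h hxB rfl
      have hfx : f x = -1 / ((Nat.find hx : ℝ) + 1) := by
        rw [hfval x hx, if_neg hxA]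
      obtain ⟨δ, hδ, hball⟩ := hcont _ hpos
      obtain ⟨y, hyA, hyd⟩ := Metric.mem_closure_iff.mp (hA x) δ hδ
      have hyf : 0 ≤ f y := hApos y hyA
      have := hball (by rw [dist_comm]; exact hyd)
      rw [Real.dist_eq, hfx] at this
      have habs := le_abs_self (f y - -1 / ((Nat.find hx : ℝ) + 1))
      have : |f y - -1 / ((Nat.find hx : ℝ) + 1)| < 1 / ((Nat.find hx : ℝ) + 1) := this
      have hne : -1 / ((Nat.find hx : ℝ) + 1) = -(1 / ((Nat.find hx : ℝ) + 1)) := by ring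
      linarith
end

section
/- Let X be a topological space that is the union of two disjoint dense subsets A and B, and let C ⊆ X be a set whose complement X \ C equals the intersection of a decreasing sequence of open sets F_n with F_1 = X. Define f : X → ℝ by f(x) = 0 if x ∈ X \ C, f(x) = 1/n if x ∈ A ∩ F_n \ F_{n+1}, and f(x) = -1/n if x ∈ B ∩ F_n \ F_{n+1}. Then the set of discontinuity points of f is exactly C. -/
theorem stmt_3 (X : Type*) [TopologicalSpace X]
    (A B : Set X) (hdisj : Disjoint A B) (hAB : A ∪ B = Set.univ)
    (hA : Dense A) (hB : Dense B)
    (C : Set X) (F : ℕ → Set X)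
    (hopen : ∀ n, IsOpen (F n)) (hF1 : F 1 = Set.univ)
    (hmono : ∀ n, F (n + 1) ⊆ F n)
    (hinter : (⋂ n, F n) = Cᶜ)
    (f : X → ℝ)
    (hf0 : ∀ x ∈ Cᶜ, f x = 0)
    (hfA : ∀ n : ℕ, 1 ≤ n → ∀ x ∈ ((A ∩ F n) \ F (n + 1)), f x = 1 / n)
    (hfB : ∀ n : ℕ, 1 ≤ n → ∀ x ∈ ((B ∩ F n) \ F (n + 1)), f x = -(1 / n)) :
    {x : X | ¬ ContinuousAt f x} = C := by
  classical
  have hanti : Antitone F := antitone_nat_of_succ_le hmono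
  -- every point of C has a unique "level"
  have hlevel : ∀ x ∈ C, ∃ n, 1 ≤ n ∧ x ∈ F n ∧ x ∉ F (n + 1) := by
    intro x hx
    have hx' : ∃ m, x ∉ F m := by
      by_contra h
      push_neg at h
      have : x ∈ ⋂ n, F n := Set.mem_iInter.2 h
      rw [hinter] at this
      exact this hx
    set m := Nat.find hx' with hmdef
    have hm : x ∉ F m := Nat.find_spec hx'
    have hm2 : 2 ≤ m := by
      by_contra h
      push_neg at h
      have hx1 : x ∈ F 1 := by rw [hF1]; trivial
      exact hm (hanti (by omega) hx1)
    refine ⟨m - 1, by omega, ?_, ?_⟩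
    · exact not_not.1 (Nat.find_min hx' (by omega))
    · have : m - 1 + 1 = m := by omega
      rw [this]; exact hm
  -- sign lemmas
  have hsA : ∀ y ∈ A, 0 ≤ f y := by
    intro y hy
    by_cases hc : y ∈ C
    · obtain ⟨n, hn1, hFn, hFn1⟩ := hlevel y hc
      rw [hfA n hn1 y ⟨⟨hy, hFn⟩, hFn1⟩]
      positivity
    · rw [hf0 y hc]
  have hsB : ∀ y ∈ B, f y ≤ 0 := by
    intro y hy
    by_cases hc : y ∈ C
    · obtain ⟨n, hn1, hFn, hFn1⟩ := hlevel y hc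
      rw [hfB n hn1 y ⟨⟨hy, hFn⟩, hFn1⟩]
      simp only [neg_nonpos]
      positivity
    · rw [hf0 y hc]
  -- bound lemma
  have hbd : ∀ n : ℕ, ∀ y ∈ F (n + 1), |f y| ≤ 1 / (n + 1 : ℝ) := by
    intro n y hy
    by_cases hc : y ∈ C
    · obtain ⟨m, hm1, hFm, hFm1⟩ := hlevel y hc
      have hnm : n + 1 ≤ m := by
        by_contra h
        push_neg at h
        exact hFm1 (hanti (by omega) hy)
      have hmpos : (0 : ℝ) < m := by positivity
      have hle : (n + 1 : ℝ) ≤ m := by exact_mod_cast hnm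
      have hdiv : (1 : ℝ) / m ≤ 1 / (n + 1) :=
        one_div_le_one_div_of_le (by positivity) hle
      have hyAB : y ∈ A ∪ B := by rw [hAB]; trivial
      rcases hyAB with hyA | hyB
      · rw [hfA m hm1 y ⟨⟨hyA, hFm⟩, hFm1⟩, abs_of_nonneg (by positivity)]
        exact hdiv
      · rw [hfB m hm1 y ⟨⟨hyB, hFm⟩, hFm1⟩, abs_neg, abs_of_nonneg (by positivity)]
        exact hdiv
    · rw [hf0 y hc, abs_zero]; positivity
  ext x
  simp only [Set.mem_setOf_eq]
  constructor
  · -- discontinuous → x ∈ C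
    intro hdis
    by_contra hc
    apply hdis
    have hfx : f x = 0 := hf0 x hc
    rw [ContinuousAt, hfx, NormedAddCommGroup.tendsto_nhds_zero]
    intro ε hε
    obtain ⟨n, hn⟩ := exists_nat_one_div_lt hε
    have hx' : x ∈ F (n + 1) := by
      have hxi : x ∈ ⋂ k, F k := by rw [hinter]; exact hc
      exact Set.mem_iInter.1 hxi (n + 1)
    filter_upwards [(hopen (n + 1)).mem_nhds hx'] with y hy
    calc ‖f y‖ = |f y| := Real.norm_eq_abs _
      _ ≤ 1 / (n + 1 : ℝ) := hbd n y hy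
      _ < ε := hn
  · -- x ∈ C → discontinuous
    intro hc hcont
    have hxAB : x ∈ A ∪ B := by rw [hAB]; trivial
    obtain ⟨n, hn1, hFn, hFn1⟩ := hlevel x hc
    rcases hxAB with hxA | hxB
    · have hfx : f x = 1 / n := hfA n hn1 x ⟨⟨hxA, hFn⟩, hFn1⟩
      have hpos : 0 < f x := by
        rw [hfx]
        have : (0 : ℝ) < n := by exact_mod_cast hn1
        positivity
      have hmem : f ⁻¹' Set.Ioi 0 ∈ nhds x := hcont (lt_mem_nhds hpos)
      obtain ⟨U, hUs, hUo, hxU⟩ := mem_nhds_iff.1 hmem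
      obtain ⟨b, hbB, hbU⟩ := hB.exists_mem_open hUo ⟨x, hxU⟩
      have h1 : (0 : ℝ) < f b := hUs hbU
      have h2 : f b ≤ 0 := hsB b hbB
      linarith
    · have hfx : f x = -(1 / n) := hfB n hn1 x ⟨⟨hxB, hFn⟩, hFn1⟩
      have hneg : f x < 0 := by
        rw [hfx]
        have : (0 : ℝ) < n := by exact_mod_cast hn1
        simp only [neg_neg, neg_lt_zero]
        positivity
      have hmem : f ⁻¹' Set.Iio 0 ∈ nhds x := hcont (gt_mem_nhds hneg)
      obtain ⟨U, hUs, hUo, hxU⟩ := mem_nhds_iff.1 hmem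
      obtain ⟨a, haA, haU⟩ := hA.exists_mem_open hUo ⟨x, hxU⟩
      have h1 : f a < 0 := hUs haU
      have h2 : 0 ≤ f a := hsA a haA
      linarith
end

section
/- There exists a function f : ℚ → ℚ with f ∘ f = id such that f is discontinuous at every point of ℚ. -/
/-!
Let `D` be the dyadic rationals, a dense proper subgroup of `ℚ` containing `1`; its complement
contains a translate of `D`, so it is dense as well. Fix every point of `D` and, off `D`, swap
`q` with `q ± 1` so as to exchange the unit intervals `[2k, 2k + 1)` and `[2k + 1, 2k + 2)`.
This is an involution, and the displacement `|f q - q|` is `0` on the dense set `D` and `1` on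
its dense complement, so it is continuous nowhere, and neither is `f`.
-/

open Set

theorem not_continuousAt_of_eq_on_dense_of_dist_ge {X : Type*} [PseudoMetricSpace X]
    {f : X → X} {D : Set X} {ε : ℝ} (hε : 0 < ε) (hD : Dense D) (hDc : Dense Dᶜ)
    (hfix : EqOn f id D) (hmove : ∀ x ∉ D, ε ≤ dist (f x) x) (x : X) :
    ¬ ContinuousAt f x := by
  intro hf
  have hg : ContinuousAt (fun y => dist (f y) y) x := hf.dist continuousAt_id
  have hzero : dist (f x) x ∈ closure {0} :=
    hg.continuousWithinAt.mem_closure (hD x) fun y hy => by simp [hfix hy]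
  have hfar : dist (f x) x ∈ closure (Ici ε) :=
    hg.continuousWithinAt.mem_closure (hDc x) hmove
  rw [closure_singleton, mem_singleton_iff] at hzero
  rw [closure_Ici, mem_Ici, hzero] at hfar
  exact hfar.not_gt hε

theorem AddSubgroup.dense_compl {G : Type*} [AddGroup G] [TopologicalSpace G]
    [ContinuousAdd G] {S : AddSubgroup G} (hS : Dense (S : Set G)) {g : G} (hg : g ∉ S) :
    Dense (S : Set G)ᶜ := by
  refine (hS.vadd g).mono ?_
  rintro _ ⟨s, hs, rfl⟩ hgs
  exact hg (by simpa using S.sub_mem hgs hs)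

def dyadic : AddSubgroup ℚ where
  carrier := {q | ∃ n : ℕ, q.den ∣ 2 ^ n}
  zero_mem' := ⟨0, by simp⟩
  add_mem' := by
    rintro p q ⟨m, hm⟩ ⟨n, hn⟩
    exact ⟨m + n, (Rat.add_den_dvd p q).trans (pow_add 2 m n ▸ mul_dvd_mul hm hn)⟩
  neg_mem' := by
    rintro q ⟨n, hn⟩
    exact ⟨n, by rwa [Rat.den_neg_eq_den]⟩

theorem inv_two_pow_mem_dyadic (n : ℕ) : ((2 : ℚ) ^ n)⁻¹ ∈ dyadic :=
  ⟨n, by rw [← Nat.cast_ofNat, ← Nat.cast_pow, Rat.inv_natCast_den_of_pos (by positivity)]⟩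

theorem one_mem_dyadic : (1 : ℚ) ∈ dyadic := ⟨0, by simp⟩

theorem inv_three_notMem_dyadic : (3 : ℚ)⁻¹ ∉ dyadic := by
  rintro ⟨n, hn⟩
  rw [← Nat.cast_ofNat, Rat.inv_natCast_den_of_pos (by norm_num)] at hn
  exact absurd (Nat.prime_three.dvd_of_dvd_pow hn) (by norm_num)

theorem dense_dyadic : Dense (dyadic : Set ℚ) := by
  refine dyadic.dense_of_not_isolated_zero fun ε hε => ?_
  obtain ⟨n, hn⟩ := exists_pow_lt_of_lt_one hε (by norm_num : (2 : ℚ)⁻¹ < 1)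
  exact ⟨(2 ^ n)⁻¹, inv_two_pow_mem_dyadic n, by positivity, by rwa [inv_pow] at hn⟩

open Classical in
noncomputable def swapOff (D : AddSubgroup ℚ) (q : ℚ) : ℚ :=
  if q ∈ D then q else if Even ⌊q⌋ then q + 1 else q - 1

section swapOff

variable {D : AddSubgroup ℚ} {q : ℚ}

theorem swapOff_of_mem (hq : q ∈ D) : swapOff D q = q := if_pos hq

theorem swapOff_of_notMem_of_even (hq : q ∉ D) (he : Even ⌊q⌋) : swapOff D q = q + 1 := by
  simp [swapOff, hq, he]

theorem swapOff_of_notMem_of_odd (hq : q ∉ D) (ho : ¬ Even ⌊q⌋) : swapOff D q = q - 1 := by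
  simp [swapOff, hq, ho]

theorem swapOff_involutive (h1 : (1 : ℚ) ∈ D) : Function.Involutive (swapOff D) := by
  intro q
  by_cases hq : q ∈ D
  · rw [swapOff_of_mem hq, swapOff_of_mem hq]
  by_cases he : Even ⌊q⌋
  · have hq' : q + 1 ∉ D := (D.add_mem_cancel_right h1).not.mpr hq
    have ho : ¬ Even ⌊q + 1⌋ := by simpa [Int.even_add_one] using he
    rw [swapOff_of_notMem_of_even hq he, swapOff_of_notMem_of_odd hq' ho, add_sub_cancel_right]
  · have hq' : q - 1 ∉ D := by
      rw [sub_eq_add_neg]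
      exact (D.add_mem_cancel_right (D.neg_mem h1)).not.mpr hq
    have he' : Even ⌊q - 1⌋ := by simpa [Int.even_sub_one] using he
    rw [swapOff_of_notMem_of_odd hq he, swapOff_of_notMem_of_even hq' he', sub_add_cancel]

theorem dist_swapOff_of_notMem (hq : q ∉ D) : dist (swapOff D q) q = 1 := by
  by_cases he : Even ⌊q⌋
  · simp [swapOff_of_notMem_of_even hq he]
  · simp [swapOff_of_notMem_of_odd hq he]

end swapOff

theorem stmt_11 : ∃ f : ℚ → ℚ, (∀ x, f (f x) = x) ∧
    ∀ x : ℚ, ¬ ContinuousAt f x :=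
  ⟨swapOff dyadic, swapOff_involutive one_mem_dyadic,
    not_continuousAt_of_eq_on_dense_of_dist_ge one_pos dense_dyadic
      (dyadic.dense_compl dense_dyadic inv_three_notMem_dyadic)
      (fun _ hq => swapOff_of_mem hq) fun _ hq => (dist_swapOff_of_notMem hq).ge⟩
end

section
/- There exists a function f : ℚ → ℚ with f ∘ f = id whose set of discontinuity points is exactly the set of rationals in the closed interval [0,1]. -/
/-!
Let `f` fix every rational outside `[0, 1]` and every rational of odd denominator, and reflect
`x ↦ 1 - x` the rationals of `[0, 1]` with even denominator (the reflection preserves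
denominators). Both classes of denominators are dense, so a point `x ∈ [0, 1]` of continuity would
satisfy `f x = x` and `f x = 1 - x`, forcing `x = 1/2`; swapping `0` and `1/2` rules this out too.
-/

open Set

theorem ContinuousAt.eq_of_eqOn_of_mem_closure {X Y : Type*} [TopologicalSpace X]
    [TopologicalSpace Y] [T2Space Y] {f g : X → Y} {s : Set X} {x : X} (hf : ContinuousAt f x)
    (hg : ContinuousAt g x) (hfg : EqOn f g s) (hx : x ∈ closure s) : f x = g x := by
  have := mem_closure_iff_nhdsWithin_neBot.mp hx
  exact tendsto_nhds_unique (hf.tendsto.mono_left nhdsWithin_le_nhds)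
    ((hg.tendsto.mono_left nhdsWithin_le_nhds).congr' (eventuallyEq_nhdsWithin_of_eqOn hfg).symm)

theorem Dense.Icc_subset_closure_Ioo_inter {α : Type*} [LinearOrder α] [TopologicalSpace α]
    [OrderTopology α] [DenselyOrdered α] {s : Set α} (hs : Dense s) {a b : α} (hab : a ≠ b) :
    Icc a b ⊆ closure (Ioo a b ∩ s) := by
  rw [← closure_Ioo hab]
  exact closure_minimal (hs.open_subset_closure_inter isOpen_Ioo) isClosed_closure

namespace Rat

theorem exists_odd_div_pow_mem_Ioo {a b : ℚ} (hab : a < b) {p : ℕ} (hp : 2 ≤ p) :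
    ∃ (N : ℕ) (k : ℤ), Odd k ∧ (k : ℚ) / ((p ^ (N + 1) : ℕ) : ℤ) ∈ Ioo a b := by
  have hp1 : (1 : ℚ) < p := by exact_mod_cast hp
  obtain ⟨N, hN⟩ := pow_unbounded_of_one_lt (2 / (b - a)) hp1
  set m : ℚ := (((p ^ (N + 1) : ℕ) : ℤ) : ℚ)
  have hm : 0 < m := by positivity
  have hwide : 2 < (b - a) * m := by
    rw [div_lt_iff₀' (sub_pos.mpr hab)] at hN
    have : (p : ℚ) ^ N ≤ m := by
      simp only [m, Int.cast_natCast, Nat.cast_pow]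
      exact pow_le_pow_right₀ hp1.le N.le_succ
    nlinarith
  -- `2 * j + 1` is the first odd integer above `a * m`; it lies below `a * m + 2 < b * m`.
  set j := ⌊(a * m + 1) / 2⌋
  have hj : (j : ℚ) ≤ (a * m + 1) / 2 := Int.floor_le _
  have hj' : (a * m + 1) / 2 < j + 1 := Int.lt_floor_add_one _
  refine ⟨N, 2 * j + 1, odd_two_mul_add_one j, ?_, ?_⟩
  · rw [lt_div_iff₀ hm]; push_cast; linarith
  · rw [div_lt_iff₀ hm]; push_cast; linarith

theorem dense_setOf_odd_den : Dense {q : ℚ | Odd q.den} := by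
  refine dense_of_exists_between fun a b hab => ?_
  obtain ⟨N, k, -, hk⟩ := exists_odd_div_pow_mem_Ioo hab (by norm_num : 2 ≤ 3)
  refine ⟨_, ?_, hk⟩
  have hdvd := den_dvd k (3 ^ (N + 1) : ℕ)
  rw [divInt_eq_div, Int.natCast_dvd_natCast] at hdvd
  exact (Odd.pow (by decide : Odd 3)).of_dvd_nat hdvd

theorem dense_setOf_even_den : Dense {q : ℚ | Even q.den} := by
  refine dense_of_exists_between fun a b hab => ?_
  obtain ⟨N, k, hk, hkab⟩ := exists_odd_div_pow_mem_Ioo hab le_rfl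
  refine ⟨_, ?_, hkab⟩
  have hcop : Nat.Coprime k.natAbs ((2 ^ (N + 1) : ℕ) : ℤ).natAbs := by
    rw [Int.natAbs_natCast]
    exact (Nat.coprime_two_right.mpr (Int.natAbs_odd.mpr hk)).pow_right _
  have hden := den_div_eq_of_coprime (by positivity) hcop
  rw [Int.natCast_inj] at hden
  rw [mem_ofPred_eq, hden]
  exact (Nat.even_pow' N.succ_ne_zero).mpr even_two

end Rat

def evenDenReflection (x : ℚ) : ℚ :=
  if x = 0 then 1 / 2
  else if x = 1 / 2 then 0
  else if x ∈ Icc 0 1 ∧ Even x.den then 1 - x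
  else x

theorem evenDenReflection_zero : evenDenReflection 0 = 1 / 2 := if_pos rfl

theorem evenDenReflection_half : evenDenReflection (1 / 2) = 0 := by
  rw [evenDenReflection, if_neg (by norm_num), if_pos rfl]

theorem evenDenReflection_of_even_den {x : ℚ} (h0 : x ≠ 0) (hh : x ≠ 1 / 2) (hx : x ∈ Icc 0 1)
    (hd : Even x.den) : evenDenReflection x = 1 - x := by
  rw [evenDenReflection, if_neg h0, if_neg hh, if_pos ⟨hx, hd⟩]

theorem evenDenReflection_eq_self {x : ℚ} (h0 : x ≠ 0) (hh : x ≠ 1 / 2)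
    (hx : ¬(x ∈ Icc 0 1 ∧ Even x.den)) : evenDenReflection x = x := by
  rw [evenDenReflection, if_neg h0, if_neg hh, if_neg hx]

theorem evenDenReflection_involutive : Function.Involutive evenDenReflection := by
  intro x
  by_cases h0 : x = 0
  · rw [h0, evenDenReflection_zero, evenDenReflection_half]
  by_cases hh : x = 1 / 2
  · rw [hh, evenDenReflection_half, evenDenReflection_zero]
  by_cases hx : x ∈ Icc 0 1 ∧ Even x.den
  · obtain ⟨⟨hx0, hx1⟩, hd⟩ := hx
    have h1 : x ≠ 1 := by rintro rfl; exact Nat.not_even_one hd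
    have hden : (1 - x).den = x.den := by simp
    rw [evenDenReflection_of_even_den h0 hh ⟨hx0, hx1⟩ hd,
      evenDenReflection_of_even_den (sub_ne_zero.mpr h1.symm) (fun h => hh (by linarith))
        ⟨by linarith, by linarith⟩ (hden ▸ hd), sub_sub_cancel]
  · rw [evenDenReflection_eq_self h0 hh hx, evenDenReflection_eq_self h0 hh hx]

theorem continuousAt_evenDenReflection_of_notMem_Icc {x : ℚ} (hx : x ∉ Icc 0 1) :
    ContinuousAt evenDenReflection x := by
  refine continuousAt_id.congr ?_
  filter_upwards [isClosed_Icc.isOpen_compl.mem_nhds hx] with y hy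
  refine (evenDenReflection_eq_self ?_ ?_ fun h => hy h.1).symm
  · rintro rfl; simp at hy
  · rintro rfl; norm_num at hy

theorem not_continuousAt_evenDenReflection_of_mem_Icc {x : ℚ} (hx : x ∈ Icc 0 1) :
    ¬ContinuousAt evenDenReflection x := by
  intro hcont
  have hfix : evenDenReflection x = x :=
    hcont.eq_of_eqOn_of_mem_closure continuousAt_id
      (fun y hy => evenDenReflection_eq_self hy.2 (by rintro rfl; norm_num at hy)
        fun h => Nat.not_even_iff_odd.mpr hy.1 h.2)
      ((Rat.dense_setOf_odd_den.sdiff_singleton 0).closure_eq ▸ mem_univ x)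
  have hreflect : evenDenReflection x = 1 - x :=
    hcont.eq_of_eqOn_of_mem_closure (by fun_prop)
      (fun y hy => evenDenReflection_of_even_den hy.1.1.ne' hy.2.2 (Ioo_subset_Icc_self hy.1)
        hy.2.1)
      ((Rat.dense_setOf_even_den.sdiff_singleton (1 / 2)).Icc_subset_closure_Ioo_inter
        zero_ne_one hx)
  obtain rfl : x = 1 / 2 := by linarith
  norm_num [evenDenReflection_half] at hfix

theorem stmt_12 : ∃ f : ℚ → ℚ, (∀ x, f (f x) = x) ∧
    {x : ℚ | ¬ ContinuousAt f x} = Set.Icc (0 : ℚ) 1 := by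
  refine ⟨evenDenReflection, evenDenReflection_involutive, ?_⟩
  ext x
  exact ⟨fun hdisc => by_contra fun hx => hdisc (continuousAt_evenDenReflection_of_notMem_Icc hx),
    not_continuousAt_evenDenReflection_of_mem_Icc⟩
end

section
/- Every countable dense-in-itself subset of ℝ can be partitioned into two disjoint dense-in-itself subsets that are each dense in the original set. -/
open Set Filter Function TopologicalSpace

/-! Dense-in-itself sets in a second-countable T1 space meet every basic open set in either the
empty set or an infinite set. Choosing, injectively, two points of `X` in each basic open set
meeting `X` yields two disjoint sets, each dense in `X`; every subset of `X` dense in `X` is again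
dense-in-itself. -/

theorem exists_injective_forall_mem_of_infinite {ι α : Type*} [Countable ι] {s : ι → Set α}
    (hs : ∀ i, (s i).Infinite) : ∃ f : ι → α, Injective f ∧ ∀ i, f i ∈ s i := by
  classical
  obtain ⟨e, he⟩ := Countable.exists_injective_nat ι
  -- Hall's condition holds for finite subsets `t i ⊆ s i` of size `e i + 1`.
  choose t hts ht using fun i => (hs i).exists_subset_card_eq (e i + 1)
  have hall : ∀ u : Finset ι, u.card ≤ (u.biUnion t).card := by
    intro u
    rcases u.eq_empty_or_nonempty with rfl | hu
    · simp
    obtain ⟨i, hi, hmax⟩ := u.exists_max_image e hu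
    calc u.card = (u.image e).card := (Finset.card_image_of_injective u he).symm
      _ ≤ (Finset.range (e i + 1)).card :=
        Finset.card_le_card fun n hn => by
          obtain ⟨j, hj, rfl⟩ := Finset.mem_image.mp hn
          exact Finset.mem_range.mpr (Nat.lt_succ_of_le (hmax j hj))
      _ = (t i).card := by rw [Finset.card_range, ht]
      _ ≤ (u.biUnion t).card := Finset.card_le_card (Finset.subset_biUnion_of_mem t hi)
  obtain ⟨f, hf, hft⟩ := (Finset.all_card_le_biUnion_card_iff_exists_injective t).mp hall
  exact ⟨f, hf, fun i => hts i (hft i)⟩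

section Preperfect

variable {α : Type*} [TopologicalSpace α] [T1Space α] {X : Set α}

theorem Preperfect.of_subset_of_subset_closure {A : Set α} (hX : Preperfect X) (hAX : A ⊆ X)
    (hXA : X ⊆ closure A) : Preperfect A := by
  have hcl : closure A = closure X :=
    (closure_mono hAX).antisymm (closure_minimal hXA isClosed_closure)
  rw [preperfect_iff_perfect_closure, hcl]
  exact hX.perfect_closure

theorem Preperfect.infinite_inter_of_isOpen {U : Set α} (hX : Preperfect X) (hU : IsOpen U)
    (hUX : (U ∩ X).Nonempty) : (U ∩ X).Infinite :=
  let ⟨x, hx⟩ := hUX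
  Set.Infinite.of_accPt (hX.open_inter hU x hx)

theorem Preperfect.exists_subset_closure_and_closure_diff [SecondCountableTopology α]
    (hX : Preperfect X) : ∃ B ⊆ X, X ⊆ closure B ∧ X ⊆ closure (X \ B) := by
  let 𝒰 := {U // U ∈ countableBasis α ∧ (U ∩ X).Nonempty}
  have : Countable 𝒰 := ((countable_countableBasis α).mono fun _ hU => hU.1).to_subtype
  obtain ⟨f, hf, hfX⟩ := exists_injective_forall_mem_of_infinite
    (s := fun p : 𝒰 × Bool => p.1.1 ∩ X) fun p =>
      hX.infinite_inter_of_isOpen (isOpen_of_mem_countableBasis p.1.2.1) p.1.2.2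
  have hdense : ∀ b, X ⊆ closure (range fun U => f (U, b)) := by
    intro b x hx
    rw [mem_closure_iff_nhds]
    intro V hV
    obtain ⟨U, hU, hxU, hUV⟩ := (isBasis_countableBasis α).mem_nhds_iff.mp hV
    let U' : 𝒰 := ⟨U, hU, x, hxU, hx⟩
    exact ⟨f (U', b), hUV (hfX (U', b)).1, U', rfl⟩
  refine ⟨range fun U => f (U, true), ?_, hdense true, (hdense false).trans (closure_mono ?_)⟩
  · rintro _ ⟨U, rfl⟩
    exact (hfX (U, true)).2
  · rintro _ ⟨U, rfl⟩
    refine ⟨(hfX (U, false)).2, ?_⟩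
    rintro ⟨V, hV⟩
    simpa using hf hV

end Preperfect

theorem stmt_16_general (X : Set ℝ)
    (hni : ∀ x ∈ X, AccPt x (Filter.principal X)) :
    ∃ A B : Set ℝ, A ∪ B = X ∧ Disjoint A B ∧
      (∀ x ∈ A, AccPt x (Filter.principal A)) ∧
      (∀ x ∈ B, AccPt x (Filter.principal B)) ∧
      X ⊆ closure A ∧ X ⊆ closure B := by
  have hX : Preperfect X := hni
  obtain ⟨B, hBX, hXB, hXA⟩ := hX.exists_subset_closure_and_closure_diff
  exact ⟨X \ B, B, sdiff_union_of_subset hBX, disjoint_sdiff_left,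
    hX.of_subset_of_subset_closure sdiff_subset hXA, hX.of_subset_of_subset_closure hBX hXB,
    hXA, hXB⟩

theorem stmt_16 (X : Set ℝ) (hX : X.Countable)
    (hni : ∀ x ∈ X, AccPt x (Filter.principal X)) :
    ∃ A B : Set ℝ, A ∪ B = X ∧ Disjoint A B ∧
      (∀ x ∈ A, AccPt x (Filter.principal A)) ∧
      (∀ x ∈ B, AccPt x (Filter.principal B)) ∧
      X ⊆ closure A ∧ X ⊆ closure B :=
  stmt_16_general X hni
end
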